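/- If a sequence (K_n, d^{K_n}) of nonempty compact metric spaces converges to a nonempty compact metric space (K, d^K) in the Gromov–Hausdorff topology, then for every ε > 0 that is a continuity point of the map ε' ↦ N_{d^K}(K, ε'), one has lim_{n→∞} N_{d^{K_n}}(K_n, ε) = N_{d^K}(K, ε). In particular this equality holds for all but countably many ε > 0. -/

import Mathlib

/-!
Covering numbers are stable under Hausdorff perturbation: if two compact sets of a metric space
are at Hausdorff distance `< δ`, moving the centres of a minimal `ε`-cover of one of them to nearby
points of the other gives an `(ε + 2δ)`-cover of the other. Through an optimal Gromov–Hausdorff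
coupling this gives `N(X, ε + 2δ) ≤ N(Y, ε)` whenever `d_GH(X, Y) < δ`. At a continuity point `ε`
the integer-valued function `N(L, ·)` is constant on some `[ε - 2d, ε + 2d]`, and once
`d_GH(K n, L) < d` the two comparisons squeeze `N(K n, ε)` between `N(L, ε + 2d)` and
`N(L, ε - 2d)`. Finally `N(L, ·)` is antitone on `(0, ∞)`, so it has only countably many
discontinuities.
-/

open Filter Set
open scoped ENNReal Topology

universe u v

/-- The metric entropy `N_d(K, ε)` of a subset `K` of a metric space: the minimal cardinality
of a finite subset `A ⊆ K` such that every point of `K` is within distance `ε` of `A`. -/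
noncomputable def coveringNumber {S : Type*} [MetricSpace S] (K : Set S) (ε : ℝ) : ℕ :=
  sInf {n : ℕ | ∃ A : Finset S, ↑A ⊆ K ∧ A.card = n ∧ ∀ x ∈ K, ∃ a ∈ A, dist x a ≤ ε}

section CoveringNumber

variable {S : Type*} [MetricSpace S] {K : Set S} {ε : ℝ}

theorem coveringNumber_le_card (A : Finset S) (hAK : ↑A ⊆ K)
    (hcov : ∀ x ∈ K, ∃ a ∈ A, dist x a ≤ ε) : coveringNumber K ε ≤ A.card :=
  Nat.sInf_le ⟨A, hAK, rfl, hcov⟩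

theorem IsCompact.exists_finset_card_eq_coveringNumber (hK : IsCompact K) (hε : 0 < ε) :
    ∃ A : Finset S, ↑A ⊆ K ∧ A.card = coveringNumber K ε ∧ ∀ x ∈ K, ∃ a ∈ A, dist x a ≤ ε := by
  have hne : {n : ℕ | ∃ A : Finset S, ↑A ⊆ K ∧ A.card = n ∧
      ∀ x ∈ K, ∃ a ∈ A, dist x a ≤ ε}.Nonempty := by
    obtain ⟨t, htK, htfin, hKt⟩ := finite_cover_balls_of_compact hK hε
    refine ⟨_, htfin.toFinset, by simpa using htK, rfl, fun x hx => ?_⟩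
    obtain ⟨a, ha, hxa⟩ := mem_iUnion₂.1 (hKt hx)
    exact ⟨a, htfin.mem_toFinset.2 ha, (Metric.mem_ball.1 hxa).le⟩
  exact Nat.sInf_mem hne

theorem IsCompact.antitoneOn_coveringNumber (hK : IsCompact K) :
    AntitoneOn (coveringNumber K) (Ioi 0) := by
  intro ε hε ε' _ hεε'
  obtain ⟨A, hAK, hcard, hcov⟩ := hK.exists_finset_card_eq_coveringNumber hε
  exact hcard ▸ coveringNumber_le_card A hAK fun x hx =>
    (hcov x hx).imp fun _ ⟨ha, hxa⟩ => ⟨ha, hxa.trans hεε'⟩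

theorem IsCompact.countable_setOf_not_continuousAt_coveringNumber (hK : IsCompact K) :
    {ε : ℝ | 0 < ε ∧ ¬ContinuousAt (fun e => (coveringNumber K e : ℝ)) ε}.Countable := by
  refine ((Nat.mono_cast (α := ℝ)).comp_antitoneOn hK.antitoneOn_coveringNumber)
    |>.countable_not_continuousWithinAt.mono ?_
  rintro ε ⟨hε, hdisc⟩
  exact ⟨hε, fun hcont => hdisc (hcont.continuousAt (Ioi_mem_nhds hε))⟩

theorem coveringNumber_image_of_isometry {T : Type*} [MetricSpace T] {f : S → T} (hf : Isometry f)
    (K : Set S) (ε : ℝ) : coveringNumber (f '' K) ε = coveringNumber K ε := by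
  classical
  unfold coveringNumber
  congr 1
  ext n
  constructor
  · rintro ⟨B, hBK, rfl, hcov⟩
    obtain ⟨A, hAK, rfl⟩ := Finset.subset_set_image_iff.1 hBK
    refine ⟨A, hAK, (Finset.card_image_of_injective A hf.injective).symm, fun x hx => ?_⟩
    obtain ⟨_, ha, hxa⟩ := hcov (f x) (mem_image_of_mem f hx)
    obtain ⟨a, haA, rfl⟩ := Finset.mem_image.1 ha
    exact ⟨a, haA, by rwa [← hf.dist_eq]⟩
  · rintro ⟨A, hAK, rfl, hcov⟩
    refine ⟨A.image f, by simpa using image_mono hAK,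
      Finset.card_image_of_injective A hf.injective, ?_⟩
    rintro _ ⟨x, hx, rfl⟩
    obtain ⟨a, haA, hxa⟩ := hcov x hx
    exact ⟨f a, Finset.mem_image_of_mem f haA, by rwa [hf.dist_eq]⟩

theorem coveringNumber_le_of_hausdorffDist_lt {s t : Set S} {δ : ℝ} (ht : IsCompact t)
    (hfin : Metric.hausdorffEDist s t ≠ ⊤) (hst : Metric.hausdorffDist s t < δ) (hε : 0 < ε) :
    coveringNumber s (ε + 2 * δ) ≤ coveringNumber t ε := by
  classical
  obtain ⟨A, hAt, hcard, hcov⟩ := ht.exists_finset_card_eq_coveringNumber hε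
  have hmove : ∀ a ∈ t, ∃ x ∈ s, dist x a < δ := fun a ha =>
    Metric.exists_dist_lt_of_hausdorffDist_lt' ha hst hfin
  choose! c hcs hcdist using hmove
  calc coveringNumber s (ε + 2 * δ) ≤ (A.image c).card := by
        refine coveringNumber_le_card _ (by
          rw [Finset.coe_image, image_subset_iff]; exact fun a ha => hcs a (hAt ha)) ?_
        intro x hx
        obtain ⟨y, hyt, hxy⟩ := Metric.exists_dist_lt_of_hausdorffDist_lt hx hst hfin
        obtain ⟨a, haA, hya⟩ := hcov y hyt
        refine ⟨c a, Finset.mem_image_of_mem c haA, ?_⟩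
        calc dist x (c a) ≤ dist x y + dist y a + dist a (c a) := dist_triangle4 _ _ _ _
          _ ≤ δ + ε + δ := by
              rw [dist_comm a]
              linarith [hcdist a (hAt haA)]
          _ = ε + 2 * δ := by ring
    _ ≤ A.card := Finset.card_image_le
    _ = coveringNumber t ε := hcard

end CoveringNumber

theorem coveringNumber_univ_le_of_ghDist_lt {X : Type u} [MetricSpace X] [CompactSpace X]
    [Nonempty X] {Y : Type v} [MetricSpace Y] [CompactSpace Y] [Nonempty Y] {δ ε : ℝ}
    (hXY : GromovHausdorff.ghDist X Y < δ) (hε : 0 < ε) :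
    coveringNumber (univ : Set X) (ε + 2 * δ) ≤ coveringNumber (univ : Set Y) ε := by
  have hl := GromovHausdorff.isometry_optimalGHInjl X Y
  have hr := GromovHausdorff.isometry_optimalGHInjr X Y
  rw [← coveringNumber_image_of_isometry hl, ← coveringNumber_image_of_isometry hr, image_univ,
    image_univ]
  refine coveringNumber_le_of_hausdorffDist_lt (isCompact_range hr.continuous) ?_
    (GromovHausdorff.hausdorffDist_optimal.trans_lt hXY) hε
  exact Metric.hausdorffEDist_ne_top_of_nonempty_of_bounded (range_nonempty _) (range_nonempty _)
    (isCompact_range hl.continuous).isBounded (isCompact_range hr.continuous).isBounded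

theorem GromovHausdorff.ghDist_comm (X : Type u) [MetricSpace X] [CompactSpace X] [Nonempty X]
    (Y : Type v) [MetricSpace Y] [CompactSpace Y] [Nonempty Y] : ghDist X Y = ghDist Y X :=
  dist_comm _ _

theorem eventually_eq_of_continuousAt_natCast {α : Type*} [TopologicalSpace α] {f : α → ℕ}
    {a : α} (hf : ContinuousAt (fun x => (f x : ℝ)) a) : ∀ᶠ x in 𝓝 a, f x = f a := by
  have : ContinuousAt f a := Nat.isClosedEmbedding_coe_real.isInducing.continuousAt_iff.2 hf
  simpa [ContinuousAt, nhds_discrete] using this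

theorem tendsto_coveringNumber_of_tendsto_ghDist {ι : Type*} {l : Filter ι} (K : ι → Type u) [∀ n, MetricSpace (K n)]
    [∀ n, CompactSpace (K n)] [∀ n, Nonempty (K n)] (L : Type v) [MetricSpace L]
    [CompactSpace L] [Nonempty L]
    (hconv : Tendsto (fun n => GromovHausdorff.ghDist (K n) L) l (𝓝 0)) {ε : ℝ}
    (hε : 0 < ε) (hcont : ContinuousAt (fun e => (coveringNumber (univ : Set L) e : ℝ)) ε) :
    Tendsto (fun n => (coveringNumber (univ : Set (K n)) ε : ℝ)) l
      (𝓝 (coveringNumber (univ : Set L) ε)) := by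
  have hlocal := eventually_eq_of_continuousAt_natCast hcont
  have hshift : ∀ σ : ℝ, Tendsto (fun d => ε + σ * d) (𝓝[>] 0) (𝓝 ε) := fun σ =>
    tendsto_nhdsWithin_of_tendsto_nhds (Continuous.tendsto' (by fun_prop) 0 ε (by simp))
  obtain ⟨d, hd, hdε, hminus, hplus⟩ : ∃ d : ℝ, 0 < d ∧ 0 < ε + -2 * d ∧
      coveringNumber (univ : Set L) (ε + -2 * d) = coveringNumber (univ : Set L) ε ∧
      coveringNumber (univ : Set L) (ε + 2 * d) = coveringNumber (univ : Set L) ε :=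
    (eventually_mem_nhdsWithin.and <| ((hshift (-2)).eventually (eventually_gt_nhds hε)).and <|
      ((hshift (-2)).eventually hlocal).and ((hshift 2).eventually hlocal)).exists
  refine tendsto_const_nhds.congr' ?_
  filter_upwards [hconv.eventually (gt_mem_nhds hd)] with n hn
  have hupper : coveringNumber (univ : Set (K n)) ε ≤ coveringNumber (univ : Set L) ε := by
    have h := coveringNumber_univ_le_of_ghDist_lt hn hdε
    rwa [show ε + -2 * d + 2 * d = ε by ring, hminus] at h
  have hlower : coveringNumber (univ : Set L) ε ≤ coveringNumber (univ : Set (K n)) ε :=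
    hplus ▸ coveringNumber_univ_le_of_ghDist_lt (GromovHausdorff.ghDist_comm (K n) L ▸ hn) hε
  exact_mod_cast (le_antisymm hupper hlower).symm

/-- (Theorem: convergence of metric entropies along Gromov–Hausdorff convergence.)
If nonempty compact metric spaces `K n` converge to `L` in the Gromov–Hausdorff topology,
then for every `ε > 0` which is a continuity point of `ε' ↦ N(L, ε')`, one has
`N(K n, ε) → N(L, ε)`; in particular this convergence holds for all but countably many
`ε > 0`. -/
theorem stmt3 (K : ℕ → Type u) [∀ n, MetricSpace (K n)] [∀ n, CompactSpace (K n)]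
    [∀ n, Nonempty (K n)] (L : Type v) [MetricSpace L] [CompactSpace L] [Nonempty L]
    (hconv : Tendsto (fun n => GromovHausdorff.ghDist (K n) L) atTop (𝓝 0)) :
    (∀ ε : ℝ, 0 < ε →
      ContinuousAt (fun e => (coveringNumber (Set.univ : Set L) e : ℝ)) ε →
      Tendsto (fun n => (coveringNumber (Set.univ : Set (K n)) ε : ℝ)) atTop
        (𝓝 (coveringNumber (Set.univ : Set L) ε))) ∧
    {ε : ℝ | 0 < ε ∧
      ¬ Tendsto (fun n => (coveringNumber (Set.univ : Set (K n)) ε : ℝ)) atTop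
        (𝓝 (coveringNumber (Set.univ : Set L) ε))}.Countable := by
  have hpoint := fun (ε : ℝ) (hε : 0 < ε) => tendsto_coveringNumber_of_tendsto_ghDist K L hconv hε
  refine ⟨hpoint,
    (isCompact_univ (X := L)).countable_setOf_not_continuousAt_coveringNumber.mono ?_⟩
  rintro ε ⟨hε, hnot⟩
  exact ⟨hε, fun hcont => hnot (hpoint ε hε hcont)⟩
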